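/- Let 0 < α < 1 and n ≥ 2. Then for every row index i with 1 ≤ i ≤ n−1, the i-th row of K⁻¹ sums to zero: Σ_{j=1}^{n} (K⁻¹)_{ij} = 0. -/

import Mathlib

/-!
Writing `K_{ij} = f (max i j)` with `f k = α^(k+1)` for `k < n` and `f n = 0`, the telescoping
identity `f a = ∑_{k ≥ a} (f k - f (k+1))` gives `K = U D Uᵀ` with `U` the upper unitriangular
all-ones matrix and `D = diag (f k - f (k+1))`, whose entries are positive for `0 < α < 1`;
hence `K` is invertible. Its last column is the constant vector `α^n`, so
`K⁻¹ 1 = α^(-n) e_n`, whose first `n - 1` entries vanish.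
-/

open Matrix Finset

def upperOnes (R : Type*) [Zero R] [One R] (n : ℕ) : Matrix (Fin n) (Fin n) R :=
  of fun i k => if i ≤ k then 1 else 0

section MaxMatrix

variable {R : Type*} [CommRing R]

theorem det_upperOnes (n : ℕ) : (upperOnes R n).det = 1 := by
  rw [det_of_isUpperTriangular]
  · simp [upperOnes]
  · intro i j (hij : j < i)
    simp [upperOnes, not_le.mpr hij]

theorem upperOnes_mul_diagonal_mul_transpose_apply {n : ℕ} (d : Fin n → R) (i j : Fin n) :
    (upperOnes R n * diagonal d * (upperOnes R n)ᵀ) i j = ∑ k ∈ Ici (max i j), d k := by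
  rw [← filter_le_eq_Ici, sum_filter, mul_apply]
  refine sum_congr rfl fun k _ => ?_
  simp only [mul_diagonal, transpose_apply, upperOnes, of_apply, max_le_iff]
  split_ifs <;> simp_all

theorem sum_Ici_sub_succ {n : ℕ} (f : ℕ → R) (hf : f n = 0) (a : Fin n) :
    ∑ k ∈ Ici a, (f k - f (k + 1)) = f a := by
  have h := sum_map (Ici a) Fin.valEmbedding (fun k => f k - f (k + 1))
  rw [Fin.map_valEmbedding_Ici] at h
  simp only [Fin.valEmbedding_apply] at h
  rw [← h, ← neg_inj, ← sum_neg_distrib]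
  simp only [neg_sub]
  rw [sum_Ico_sub f a.isLt.le, hf, zero_sub]

theorem of_max_eq_upperOnes_mul_diagonal_mul_transpose {n : ℕ} (f : ℕ → R) (hf : f n = 0) :
    (of fun i j : Fin n => f (max (i : ℕ) j)) =
      upperOnes R n * diagonal (fun k : Fin n => f k - f (k + 1)) * (upperOnes R n)ᵀ := by
  ext i j
  rw [upperOnes_mul_diagonal_mul_transpose_apply, sum_Ici_sub_succ f hf, of_apply, Fin.coe_max]

theorem det_of_max_eq_prod {n : ℕ} (f : ℕ → R) (hf : f n = 0) :
    (of fun i j : Fin n => f (max (i : ℕ) j)).det = ∏ k : Fin n, (f k - f (k + 1)) := by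
  rw [of_max_eq_upperOnes_mul_diagonal_mul_transpose f hf, det_mul, det_mul, det_transpose,
    det_upperOnes, det_diagonal, one_mul, mul_one]

end MaxMatrix

theorem Matrix.sum_inv_row_eq_of_mulVec_eq_one {ι K : Type*} [Fintype ι] [DecidableEq ι]
    [Field K] {A : Matrix ι ι K} (hA : A.det ≠ 0) {v : ι → K} (hv : A *ᵥ v = 1) (i : ι) :
    ∑ j, A⁻¹ i j = v i := by
  have : Invertible A := invertibleOfIsUnitDet A (isUnit_iff_ne_zero.mpr hA)
  simpa [mulVec, dotProduct] using congrFun (inv_mulVec_eq_vec hv.symm) i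

section TCKernel

def tcKernel (α : ℝ) (n : ℕ) : Matrix (Fin n) (Fin n) ℝ :=
  of fun i j => α ^ (max (i : ℕ) j + 1)

theorem det_tcKernel_pos {α : ℝ} (hα0 : 0 < α) (hα1 : α < 1) (n : ℕ) :
    0 < (tcKernel α n).det := by
  set f : ℕ → ℝ := fun k => if k < n then α ^ (k + 1) else 0 with hf
  have hK : tcKernel α n = of fun i j : Fin n => f (max (i : ℕ) j) := by
    ext i j
    simp [tcKernel, hf]
  rw [hK, det_of_max_eq_prod f (by simp [hf])]
  refine prod_pos fun k _ => ?_
  have hfk : f k = α ^ ((k : ℕ) + 1) := if_pos k.isLt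
  have hfk1 : f (k + 1) ≤ α ^ ((k : ℕ) + 2) := by
    simp only [hf]
    split_ifs
    · exact le_rfl
    · positivity
  have hdecay : α ^ ((k : ℕ) + 2) < α ^ ((k : ℕ) + 1) :=
    pow_lt_pow_right_of_lt_one₀ hα0 hα1 (by omega)
  linarith

theorem tcKernel_mulVec_single_last {α : ℝ} (hα : α ≠ 0) (m : ℕ) :
    tcKernel α (m + 1) *ᵥ Pi.single (Fin.last m) (α ^ (m + 1))⁻¹ = 1 := by
  ext r
  simp [mulVec_single, tcKernel, max_eq_right (Fin.is_le r), hα]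

end TCKernel

/-- For the first-order stable spline kernel `K` (entries `K_{ij} = α^{max(i,j)}`,
1-indexed) with `n ≥ 2`, each of the first `n − 1` rows of `K⁻¹` sums to zero. -/
theorem stmt_4 (n : ℕ) (hn : 2 ≤ n) (α : ℝ) (hα0 : 0 < α) (hα1 : α < 1)
    (K : Matrix (Fin n) (Fin n) ℝ)
    (hK : ∀ i j : Fin n, K i j = α ^ (max (i : ℕ) (j : ℕ) + 1)) :
    ∀ i : Fin n, (i : ℕ) < n - 1 → ∑ j : Fin n, K⁻¹ i j = 0 := by
  obtain ⟨m, rfl⟩ : ∃ m, n = m + 1 := ⟨n - 1, by omega⟩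
  obtain rfl : K = tcKernel α (m + 1) := by
    ext i j
    exact hK i j
  intro i hi
  rw [sum_inv_row_eq_of_mulVec_eq_one (det_tcKernel_pos hα0 hα1 _).ne'
    (tcKernel_mulVec_single_last hα0.ne' m)]
  exact Pi.single_eq_of_ne (Fin.ne_of_lt hi) _
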